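/- Let x and y be higher-order types with disjoint leaf sets, each label occurring at most once, and let z = arrow x y. If A ∈ in(y) and B ∈ in(x) (so that A ∈ in(z) and B ∈ out(z)), then z is full-signalling from A to B. If A ∈ out(y) and B ∈ out(x) (so that B ∈ in(z) and A ∈ out(z)), then z is full-signalling from B to A. -/
import Mathlib


/-- Higher-order types over a type `σ` of elementary labels. -/
inductive Ty (σ : Type) : Type where
  | elem : σ → Ty σ
  | arrow : Ty σ → Ty σ → Ty σ

namespace Ty

variable {σ : Type} [DecidableEq σ]

/-- The labels occurring in a type. -/
def leaves : Ty σ → Finset σ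
  | elem A => {A}
  | arrow x y => leaves x ∪ leaves y

/-- Every label occurs at most once. -/
def NoDup : Ty σ → Prop
  | elem _ => True
  | arrow x y => NoDup x ∧ NoDup y ∧ Disjoint x.leaves y.leaves

/-- The pair (input labels, output labels) of a type. -/
def inOut : Ty σ → Finset σ × Finset σ
  | elem A => (∅, {A})
  | arrow x y => ((inOut x).2 ∪ (inOut y).1, (inOut x).1 ∪ (inOut y).2)

/-- Input labels. -/
def ins (x : Ty σ) : Finset σ := (inOut x).1

/-- Output labels. -/
def outs (x : Ty σ) : Finset σ := (inOut x).2

/-- A bit assignment `b` is all-ones on a finite set `S` of labels. -/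
def AllOnes (b : σ → Bool) (S : Finset σ) : Prop := ∀ i ∈ S, b i = true

/-- The set `D(x)` of bit assignments of a type. -/
def D : Ty σ → Set (σ → Bool)
  | elem A => {b | b A = false}
  | arrow x y => {b | b ∈ D y} ∪ {b | b ∉ D x ∧ ¬ AllOnes b x.leaves ∧ b ∉ D y}

/-- The immediate subterm relation. -/
inductive ImmSub : Ty σ → Ty σ → Prop
  | left (x z : Ty σ) : ImmSub x (arrow x z)
  | right (x z : Ty σ) : ImmSub x (arrow z x)

/-- Subterms: reflexive-transitive closure of the immediate subterm relation. -/
def Subterm {σ : Type} : Ty σ → Ty σ → Prop := Relation.ReflTransGen ImmSub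

/-- The critical set `S(x,A,B)`. -/
def Sset (x : Ty σ) (A B : σ) : Set (σ → Bool) :=
  {b | b A = false ∧ b B = false ∧ AllOnes b (x.outs \ {B})}

/-- `x` is no-signalling from `A` to `B`. -/
def NoSig (x : Ty σ) (A B : σ) : Prop := D x ∩ Sset x A B = ∅

/-- `x` is full-signalling from `A` to `B`. -/
def FullSig (x : Ty σ) (A B : σ) : Prop :=
  ¬ ∃ b : σ → Bool, ¬ AllOnes b x.leaves ∧ b ∉ D x ∧ b A = false ∧ b B = false ∧
    AllOnes b (x.ins \ {A})

/-- A pairing on `x`: a finite set of pairs (input label, output label) with all first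
components distinct and all second components distinct. -/
def IsPairing (x : Ty σ) (H : Finset (σ × σ)) : Prop :=
  (∀ p ∈ H, p.1 ∈ x.ins ∧ p.2 ∈ x.outs) ∧
  (∀ p ∈ H, ∀ q ∈ H, p.1 = q.1 → p = q) ∧
  (∀ p ∈ H, ∀ q ∈ H, p.2 = q.2 → p = q)

/-- The critical set `S(x,H)` for a pairing `H`. -/
def SsetH (x : Ty σ) (H : Finset (σ × σ)) : Set (σ → Bool) :=
  {b | AllOnes b (x.outs \ H.image Prod.snd) ∧ (∀ p ∈ H, b p.1 = b p.2) ∧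
    ∃ p ∈ H, b p.1 = false}

/-- The set `D(x ⊗ y)` for the tensor of two types with disjoint leaves. -/
def Dtensor (x y : Ty σ) : Set (σ → Bool) :=
  {b | b ∈ D x ∧ AllOnes b y.leaves} ∪ {b | b ∈ D y ∧ AllOnes b x.leaves} ∪ (D x ∩ D y)

/-- No-signalling from `A` to `B` for given data (set of bit assignments, output labels). -/
def NoSigData (D0 : Set (σ → Bool)) (outs0 : Finset σ) (A B : σ) : Prop :=
  D0 ∩ {b | b A = false ∧ b B = false ∧ AllOnes b (outs0 \ {B})} = ∅

/-- Full-signalling from `A` to `B` for given data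
(set of bit assignments, leaves, input labels). -/
def FullSigData (D0 : Set (σ → Bool)) (leaves0 ins0 : Finset σ) (A B : σ) : Prop :=
  ¬ ∃ b : σ → Bool, ¬ AllOnes b leaves0 ∧ b ∉ D0 ∧ b A = false ∧ b B = false ∧
    AllOnes b (ins0 \ {A})

end Ty

namespace Ty

variable {σ : Type} [DecidableEq σ]

lemma ins_outs_subset_leaves (x : Ty σ) : x.ins ⊆ x.leaves ∧ x.outs ⊆ x.leaves := by
  induction x with
  | elem A => simp [ins, outs, inOut, leaves]
  | arrow x y ihx ihy =>
    simp only [ins, outs, inOut, leaves]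
    constructor
    · exact Finset.union_subset (ihx.2.trans Finset.subset_union_left)
        ((ihy.1).trans Finset.subset_union_right)
    · exact Finset.union_subset (ihx.1.trans Finset.subset_union_left)
        ((ihy.2).trans Finset.subset_union_right)

lemma key_lemma (x : Ty σ) (b : σ → Bool) :
    (b ∈ D x → ¬ AllOnes b x.outs) ∧
    (b ∉ D x → ¬ AllOnes b x.leaves → ¬ AllOnes b x.ins) := by
  induction x with
  | elem A =>
    constructor
    · intro hb hall
      have := hall A (by simp [outs, inOut])
      simp [D] at hb
      simp [hb] at this
    · intro hb hall
      exfalso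
      apply hall
      intro i hi
      simp [leaves] at hi
      subst hi
      simp [D, Set.mem_setOf_eq] at hb
      simpa using hb
  | arrow x y ihx ihy =>
    have houts : (arrow x y).outs = x.ins ∪ y.outs := by simp [ins, outs, inOut]
    have hins : (arrow x y).ins = x.outs ∪ y.ins := by simp [ins, outs, inOut]
    constructor
    · intro hb hall
      rw [houts] at hall
      rcases hb with hb | ⟨hnx, hnl, hny⟩
      · exact (ihy.1 hb) (fun i hi => hall i (Finset.mem_union_right _ hi))
      · exact (ihx.2 hnx hnl) (fun i hi => hall i (Finset.mem_union_left _ hi))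
    · intro hb hl hall
      rw [hins] at hall
      have hleaves : (arrow x y).leaves = x.leaves ∪ y.leaves := rfl
      simp only [D, Set.mem_union, Set.mem_setOf_eq, not_or, not_and, not_not] at hb
      obtain ⟨hny, h2⟩ := hb
      by_cases hxd : b ∈ D x
      · exact (ihx.1 hxd) (fun i hi => hall i (Finset.mem_union_left _ hi))
      · have hax : AllOnes b x.leaves := by
          by_contra hnax
          exact hny (h2 hxd hnax)
        have hnay : ¬ AllOnes b y.leaves := by
          intro hay
          apply hl
          intro i hi
          rw [hleaves] at hi
          rcases Finset.mem_union.mp hi with h | h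
          · exact hax i h
          · exact hay i h
        exact (ihy.2 hny hnay) (fun i hi => hall i (Finset.mem_union_right _ hi))

end Ty

open Ty in
/-- for `z = arrow x y`, inputs of `y` fully signal to inputs of `x`, and
outputs of `x` fully signal to outputs of `y` reversed as stated. -/
theorem stmt14 {σ : Type} [DecidableEq σ] (x y : Ty σ) (hx : x.NoDup) (hy : y.NoDup)
    (hdisj : Disjoint x.leaves y.leaves) :
    (∀ A B : σ, A ∈ y.ins → B ∈ x.ins → FullSig (Ty.arrow x y) A B) ∧
    (∀ A B : σ, A ∈ y.outs → B ∈ x.outs → FullSig (Ty.arrow x y) B A) := by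
  have hins : (Ty.arrow x y).ins = x.outs ∪ y.ins := by simp [ins, outs, inOut]
  have hleaves : (Ty.arrow x y).leaves = x.leaves ∪ y.leaves := rfl
  constructor
  · intro A B hA hB
    rintro ⟨b, hnl, hnd, hbA, hbB, hall⟩
    rw [hins] at hall
    -- A ∈ y.ins ⊆ y.leaves, so A ∉ x.leaves hence A ∉ x.outs
    have hAy : A ∈ y.leaves := (ins_outs_subset_leaves y).1 hA
    have hAnx : A ∉ x.outs := fun h =>
      (Finset.disjoint_left.mp hdisj ((ins_outs_subset_leaves x).2 h)) hAy
    have hallx : AllOnes b x.outs := fun i hi =>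
      hall i (Finset.mem_sdiff.mpr ⟨Finset.mem_union_left _ hi,
        by simp; rintro rfl; exact hAnx hi⟩)
    -- b ∉ D z gives b ∉ D y and (b ∈ D x ∨ AllOnes b x.leaves)
    simp only [D, Set.mem_union, Set.mem_setOf_eq, not_or, not_and, not_not] at hnd
    obtain ⟨hny, h2⟩ := hnd
    have hBx : B ∈ x.leaves := (ins_outs_subset_leaves x).1 hB
    have hnax : ¬ AllOnes b x.leaves := fun hax => by simp [hax B hBx] at hbB
    by_cases hxd : b ∈ D x
    · exact (key_lemma x b).1 hxd hallx
    · exact hny (h2 hxd hnax)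
  · intro A B hA hB
    rintro ⟨b, hnl, hnd, hbB, hbA, hall⟩
    rw [hins] at hall
    have hBx : B ∈ x.leaves := (ins_outs_subset_leaves x).2 hB
    have hBny : B ∉ y.ins := fun h =>
      (Finset.disjoint_left.mp hdisj hBx) ((ins_outs_subset_leaves y).1 h)
    have hally : AllOnes b y.ins := fun i hi =>
      hall i (Finset.mem_sdiff.mpr ⟨Finset.mem_union_right _ hi,
        by simp; rintro rfl; exact hBny hi⟩)
    simp only [D, Set.mem_union, Set.mem_setOf_eq, not_or, not_and, not_not] at hnd
    obtain ⟨hny, _⟩ := hnd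
    have hAy : A ∈ y.leaves := (ins_outs_subset_leaves y).2 hA
    have hnay : ¬ AllOnes b y.leaves := fun hay => by simp [hay A hAy] at hbA
    exact (key_lemma y b).2 hny hnay hally
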